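/- arXiv:2403.07148 — 4 statements merged into one kernel-verified Lean document; each statement's English description precedes it below -/
import Mathlib

section
/- Suppose each operator F_i : R^d → R^d is L_i-Lipschitz, F = (1/n)Σ_{i=1}^n F_i, and z_* satisfies F(z_*) = 0. Then for all z ∈ R^d: (1/n)Σ_{i=1}^n ‖F_i(z) - F(z)‖² ≤ A‖z - z_*‖² + 2σ_*², where A = (2/n)Σ_{i=1}^n L_i² and σ_*² = (1/n)Σ_{i=1}^n ‖F_i(z_*)‖². -/
/-!
The squared deviations of the `F i z` from their mean sum to at most the second moment
`∑ ‖F i z‖²`, and the Lipschitz bound `‖F i z‖ ≤ L i ‖z - z⋆‖ + ‖F i z⋆‖` together with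
`(a + b)² ≤ 2a² + 2b²` bounds each of its terms.
-/

open Finset

-- Also for `s = ∅`, where `(#s : ℝ)⁻¹ = 0` and both sides vanish.
theorem Finset.card_smul_inv_card_smul_sum {ι E : Type*} [AddCommGroup E] [Module ℝ E]
    (s : Finset ι) (x : ι → E) :
    (#s : ℝ) • ((#s : ℝ)⁻¹ • ∑ i ∈ s, x i) = ∑ i ∈ s, x i := by
  rcases s.eq_empty_or_nonempty with rfl | hs
  · simp
  · rw [smul_smul, mul_inv_cancel₀ (by exact_mod_cast hs.card_pos.ne'), one_smul]

section Variance

variable {ι E : Type*} [NormedAddCommGroup E] [InnerProductSpace ℝ E]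

theorem Finset.sum_norm_sub_mean_sq (s : Finset ι) (x : ι → E) :
    ∑ i ∈ s, ‖x i - (#s : ℝ)⁻¹ • ∑ j ∈ s, x j‖ ^ 2 =
      ∑ i ∈ s, ‖x i‖ ^ 2 - #s * ‖(#s : ℝ)⁻¹ • ∑ j ∈ s, x j‖ ^ 2 := by
  set m := (#s : ℝ)⁻¹ • ∑ j ∈ s, x j
  have hsum : ∑ i ∈ s, x i = (#s : ℝ) • m := (s.card_smul_inv_card_smul_sum x).symm
  simp only [norm_sub_sq_real, sum_add_distrib, sum_sub_distrib, ← mul_sum, ← sum_inner, hsum,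
    real_inner_smul_left, real_inner_self_eq_norm_sq, sum_const, nsmul_eq_mul]
  ring

theorem Finset.sum_norm_sub_mean_sq_le (s : Finset ι) (x : ι → E) :
    ∑ i ∈ s, ‖x i - (#s : ℝ)⁻¹ • ∑ j ∈ s, x j‖ ^ 2 ≤ ∑ i ∈ s, ‖x i‖ ^ 2 := by
  rw [s.sum_norm_sub_mean_sq x]
  have : 0 ≤ (#s : ℝ) * ‖(#s : ℝ)⁻¹ • ∑ j ∈ s, x j‖ ^ 2 := by positivity
  linarith

end Variance

theorem norm_sq_le_of_norm_sub_le {α E : Type*} [SeminormedAddCommGroup α]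
    [SeminormedAddCommGroup E] {f : α → E} {K : ℝ} (a b : α)
    (hf : ‖f a - f b‖ ≤ K * ‖a - b‖) :
    ‖f a‖ ^ 2 ≤ 2 * (K ^ 2 * ‖a - b‖ ^ 2) + 2 * ‖f b‖ ^ 2 := by
  have htri : ‖f a‖ ≤ K * ‖a - b‖ + ‖f b‖ := by
    linarith [norm_le_norm_sub_add (f a) (f b)]
  calc ‖f a‖ ^ 2 ≤ (K * ‖a - b‖ + ‖f b‖) ^ 2 := pow_le_pow_left₀ (norm_nonneg _) htri 2
    _ ≤ 2 * ((K * ‖a - b‖) ^ 2 + ‖f b‖ ^ 2) := add_sq_le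
    _ = 2 * (K ^ 2 * ‖a - b‖ ^ 2) + 2 * ‖f b‖ ^ 2 := by ring

theorem variance_bound_of_lipschitz_general {E : Type*} [NormedAddCommGroup E] [InnerProductSpace ℝ E]
    (n : ℕ) (F : Fin n → E → E) (L : Fin n → ℝ)
    (hLip : ∀ i, ∀ z₁ z₂, ‖F i z₁ - F i z₂‖ ≤ L i * ‖z₁ - z₂‖)
    (Favg : E → E) (hF : ∀ z, Favg z = (n : ℝ)⁻¹ • ∑ i, F i z)
    (zstar : E) (z : E) :
    (n : ℝ)⁻¹ * ∑ i, ‖F i z - Favg z‖ ^ 2 ≤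
      ((2 / (n : ℝ)) * ∑ i, L i ^ 2) * ‖z - zstar‖ ^ 2 +
        2 * ((n : ℝ)⁻¹ * ∑ i, ‖F i zstar‖ ^ 2) := by
  have hvar : ∑ i, ‖F i z - Favg z‖ ^ 2 ≤ ∑ i, ‖F i z‖ ^ 2 := by
    simpa [hF] using (univ : Finset (Fin n)).sum_norm_sub_mean_sq_le (F · z)
  have hmoment : ∑ i, ‖F i z‖ ^ 2 ≤
      ∑ i, (2 * (L i ^ 2 * ‖z - zstar‖ ^ 2) + 2 * ‖F i zstar‖ ^ 2) :=
    sum_le_sum fun i _ => norm_sq_le_of_norm_sub_le z zstar (hLip i z zstar)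
  calc (n : ℝ)⁻¹ * ∑ i, ‖F i z - Favg z‖ ^ 2
      ≤ (n : ℝ)⁻¹ * ∑ i, (2 * (L i ^ 2 * ‖z - zstar‖ ^ 2) + 2 * ‖F i zstar‖ ^ 2) := by
        gcongr (n : ℝ)⁻¹ * ?_; exact hvar.trans hmoment
    _ = ((2 / (n : ℝ)) * ∑ i, L i ^ 2) * ‖z - zstar‖ ^ 2 +
        2 * ((n : ℝ)⁻¹ * ∑ i, ‖F i zstar‖ ^ 2) := by
        simp only [sum_add_distrib, ← mul_sum, ← sum_mul]
        ring

theorem variance_bound_of_lipschitz {E : Type*} [NormedAddCommGroup E] [InnerProductSpace ℝ E]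
    (n : ℕ) (hn : 0 < n) (F : Fin n → E → E) (L : Fin n → ℝ)
    (hLip : ∀ i, ∀ z₁ z₂, ‖F i z₁ - F i z₂‖ ≤ L i * ‖z₁ - z₂‖)
    (Favg : E → E) (hF : ∀ z, Favg z = (n : ℝ)⁻¹ • ∑ i, F i z)
    (zstar : E) (hz : Favg zstar = 0) (z : E) :
    (n : ℝ)⁻¹ * ∑ i, ‖F i z - Favg z‖ ^ 2 ≤
      ((2 / (n : ℝ)) * ∑ i, L i ^ 2) * ‖z - zstar‖ ^ 2 +
        2 * ((n : ℝ)⁻¹ * ∑ i, ‖F i zstar‖ ^ 2) :=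
  variance_bound_of_lipschitz_general n F L hLip Favg hF zstar z
end

section
/- Suppose each F_i : R^d → R^d is L_i-Lipschitz, F = (1/n)Σ_{i=1}^n F_i, and z_* satisfies F(z_*) = 0. Then for any fixed 1 ≤ d' ≤ n and z ∈ R^d, sampling d' indices without replacement via a uniformly random permutation π of {1,...,n}: d'² · E_π[‖(1/d')Σ_{j=0}^{d'-1} F_{π(j)}(z) - F(z)‖²] ≤ (d'(n - d')/(n-1)) · (A‖z - z_*‖² + 2σ_*²), where A = (2/n)Σ_{i=1}^n L_i² and σ_*² = (1/n)Σ_{i=1}^n ‖F_i(z_*)‖². -/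
/-
Put `a i = F i z - F z`, so that `∑ i, a i = 0`, and `S = ∑ i, ‖a i‖ ^ 2`. For a uniformly random
permutation `π`, each `π j` is uniform on the indices and each pair `(π j, π k)` with `j ≠ k` is
uniform on pairs of distinct indices (both are averages over a transitive action of `Perm (Fin n)`).
Hence the mean of `⟪a (π j), a (π k)⟫` is `S / n` for `j = k` and, because `∑ i, a i = 0`,
`-S / (n (n - 1))` otherwise. Summing over the `d' ^ 2` pairs of sampled positions gives the exact
value `d' (n - d') / (n (n - 1)) * S` for `d' ^ 2` times the mean squared deviation of the sample
average. Finally centering can only decrease a second moment, so `S ≤ ∑ i, ‖F i z‖ ^ 2`, and the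
Lipschitz bound gives `‖F i z‖ ^ 2 ≤ 2 L i ^ 2 ‖z - z_*‖ ^ 2 + 2 ‖F i z_*‖ ^ 2`.
-/

open Finset RealInnerProductSpace

theorem MulAction.card_nsmul_sum_smul {G X M : Type*} [Group G] [Fintype G] [MulAction G X]
    [Fintype X] [MulAction.IsPretransitive G X] [AddCommMonoid M] (f : X → M) (x : X) :
    Fintype.card X • ∑ g : G, f (g • x) = Fintype.card G • ∑ y, f y := by
  have sum_eq (y : X) : ∑ g : G, f (g • y) = ∑ g : G, f (g • x) := by
    obtain ⟨h, rfl⟩ := MulAction.exists_smul_eq G x y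
    simpa only [Equiv.coe_mulRight, mul_smul] using
      Equiv.sum_comp (Equiv.mulRight h) (fun g => f (g • x))
  calc Fintype.card X • ∑ g : G, f (g • x) = ∑ y : X, ∑ g : G, f (g • y) := by
        simp only [sum_eq, sum_const, card_univ]
    _ = ∑ g : G, ∑ y, f y := by
        rw [sum_comm]
        exact sum_congr rfl fun g _ => Equiv.sum_comp (MulAction.toPerm g) f
    _ = Fintype.card G • ∑ y, f y := by rw [sum_const, card_univ]

theorem Function.Embedding.sum_finTwo {α M : Type*} [Fintype α] [DecidableEq α]
    [AddCommGroup M] (f : α → α → M) :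
    ∑ e : Fin 2 ↪ α, f (e 0) (e 1) = ∑ i, ∑ l, f i l - ∑ i, f i i := by
  have h := Fintype.sum_subtype_add_sum_subtype (fun p : α × α => p.1 ≠ p.2) (fun p => f p.1 p.2)
  rw [eq_sub_iff_add_eq, ← Fintype.sum_prod_type', ← h]
  congr 1
  · exact twoEmbeddingEquiv.sum_comp (fun p => f p.1.1 p.1.2)
  · refine Fintype.sum_bijective (fun i => ⟨(i, i), not_not.2 rfl⟩) ⟨fun i j h => ?_, ?_⟩ _ _
      fun _ => rfl
    · simpa using h
    · rintro ⟨⟨a, b⟩, h⟩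
      obtain rfl : a = b := not_not.1 h
      exact ⟨a, rfl⟩

theorem card_sq_mul_norm_average_sub_sq {E ι : Type*} [SeminormedAddCommGroup E] [NormedSpace ℝ E]
    [Fintype ι] (v : ι → E) (w : E) :
    (Fintype.card ι : ℝ) ^ 2 * ‖(Fintype.card ι : ℝ)⁻¹ • ∑ j, v j - w‖ ^ 2 =
      ‖∑ j, (v j - w)‖ ^ 2 := by
  rcases eq_or_ne (Fintype.card ι : ℝ) 0 with h | h
  · rw [Nat.cast_eq_zero, Fintype.card_eq_zero_iff] at h
    simp
  · have hsum :
        ∑ j, (v j - w) = (Fintype.card ι : ℝ) • ((Fintype.card ι : ℝ)⁻¹ • ∑ j, v j - w) := by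
      rw [smul_sub, smul_inv_smul₀ h, sum_sub_distrib, sum_const, card_univ, Nat.cast_smul_eq_nsmul]
    rw [hsum, norm_smul, mul_pow, RCLike.norm_natCast]

namespace Equiv.Perm

variable {α : Type*} [Fintype α] [DecidableEq α]

theorem card_nsmul_sum_apply {M : Type*} [AddCommMonoid M] (g : α → M) (j : α) :
    Fintype.card α • ∑ π : Perm α, g (π j) = Fintype.card (Perm α) • ∑ i, g i :=
  MulAction.card_nsmul_sum_smul g j

theorem descFactorial_nsmul_sum_apply_apply {M : Type*} [AddCommMonoid M] (f : α → α → M)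
    {j k : α} (hjk : j ≠ k) :
    (Fintype.card α).descFactorial 2 • ∑ π : Perm α, f (π j) (π k) =
      Fintype.card (Perm α) • ∑ e : Fin 2 ↪ α, f (e 0) (e 1) := by
  have := isMultiplyPretransitive α 2
  have h := MulAction.card_nsmul_sum_smul (G := Perm α) (fun e : Fin 2 ↪ α => f (e 0) (e 1))
    (Function.Embedding.embFinTwo hjk)
  rwa [Fintype.card_embedding_eq, Fintype.card_fin] at h

variable {E : Type*} [NormedAddCommGroup E] [InnerProductSpace ℝ E]

theorem card_mul_sum_inner_apply_apply {a : α → E} (ha : ∑ i, a i = 0) (j k : α) :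
    (Fintype.card α : ℝ) * (Fintype.card α - 1) * ∑ π : Perm α, ⟪a (π j), a (π k)⟫ =
      Fintype.card (Perm α) * (Fintype.card α * (if j = k then 1 else 0) - 1) *
        ∑ i, ‖a i‖ ^ 2 := by
  rcases eq_or_ne j k with rfl | hjk
  · have h := card_nsmul_sum_apply (fun i => ‖a i‖ ^ 2) j
    simp only [nsmul_eq_mul, real_inner_self_eq_norm_sq, ↓reduceIte] at h ⊢
    rw [mul_right_comm, h]
    ring
  · have h := descFactorial_nsmul_sum_apply_apply (fun i l => ⟪a i, a l⟫) hjk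
    have hsum : ∑ i, ∑ l, ⟪a i, a l⟫ = 0 := by
      simp only [← inner_sum, ← sum_inner, ha, inner_zero_left]
    rw [Function.Embedding.sum_finTwo (fun i l => ⟪a i, a l⟫), hsum] at h
    simp only [nsmul_eq_mul, Nat.cast_descFactorial_two, real_inner_self_eq_norm_sq] at h
    rw [if_neg hjk, h]
    ring

theorem card_mul_sum_norm_sum_apply_sq {ι : Type*} [Fintype ι] {a : α → E} (ha : ∑ i, a i = 0)
    (e : ι ↪ α) :
    (Fintype.card α : ℝ) * (Fintype.card α - 1) * ∑ π : Perm α, ‖∑ j, a (π (e j))‖ ^ 2 =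
      Fintype.card (Perm α) * (Fintype.card ι * (Fintype.card α - Fintype.card ι)) *
        ∑ i, ‖a i‖ ^ 2 := by
  have row (k : ι) : ∑ j, ((Fintype.card α : ℝ) * (if e j = e k then 1 else 0) - 1) =
      Fintype.card α - Fintype.card ι := by
    classical
    simp only [e.injective.eq_iff]
    simp [sum_sub_distrib]
  calc (Fintype.card α : ℝ) * (Fintype.card α - 1) * ∑ π : Perm α, ‖∑ j, a (π (e j))‖ ^ 2
      = ∑ k, ∑ j, (Fintype.card α : ℝ) * (Fintype.card α - 1) *
          ∑ π : Perm α, ⟪a (π (e j)), a (π (e k))⟫ := by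
        simp only [← real_inner_self_eq_norm_sq, sum_inner, inner_sum, mul_sum]
        rw [sum_comm]
        exact sum_congr rfl fun j _ => sum_comm
    _ = ∑ k, ∑ j, Fintype.card (Perm α) *
          ((Fintype.card α : ℝ) * (if e j = e k then 1 else 0) - 1) * ∑ i, ‖a i‖ ^ 2 := by
        simp only [card_mul_sum_inner_apply_apply ha]
    _ = _ := by
        simp only [← sum_mul, ← mul_sum, row, sum_const, card_univ, nsmul_eq_mul]
        ring

theorem card_sq_mul_average_norm_sample_mean_sub_sq {ι : Type*} [Fintype ι]
    (hα : 2 ≤ Fintype.card α) {x : α → E} {m : E} (hm : ∑ i, x i = (Fintype.card α : ℝ) • m)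
    (e : ι ↪ α) :
    (Fintype.card ι : ℝ) ^ 2 * ((Fintype.card (Perm α) : ℝ)⁻¹ *
        ∑ π : Perm α, ‖(Fintype.card ι : ℝ)⁻¹ • ∑ j, x (π (e j)) - m‖ ^ 2) =
      Fintype.card ι * (Fintype.card α - Fintype.card ι) /
        (Fintype.card α * (Fintype.card α - 1)) * ∑ i, ‖x i - m‖ ^ 2 := by
  have hcentered : ∑ i, (x i - m) = 0 := by
    rw [sum_sub_distrib, hm, sum_const, card_univ, Nat.cast_smul_eq_nsmul, sub_self]
  have h := card_mul_sum_norm_sum_apply_sq hcentered e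
  have hN : (0 : ℝ) < Fintype.card (Perm α) := by exact_mod_cast Fintype.card_pos
  have hα' : (2 : ℝ) ≤ Fintype.card α := by exact_mod_cast hα
  have hα1 : (Fintype.card α : ℝ) - 1 ≠ 0 := by linarith
  rw [mul_left_comm, mul_sum]
  simp only [card_sq_mul_norm_average_sub_sq]
  field_simp
  linarith

end Equiv.Perm

theorem sum_norm_sub_sq_le_sum_norm_sq {E ι : Type*} [NormedAddCommGroup E] [InnerProductSpace ℝ E]
    [Fintype ι] {x : ι → E} {m : E}
    (hm : ∑ i, x i = (Fintype.card ι : ℝ) • m) :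
    ∑ i, ‖x i - m‖ ^ 2 ≤ ∑ i, ‖x i‖ ^ 2 := by
  have hcross : ∑ i, ⟪x i, m⟫ = Fintype.card ι * ‖m‖ ^ 2 := by
    rw [← sum_inner, hm, real_inner_smul_left, real_inner_self_eq_norm_sq]
  simp only [norm_sub_sq_real, sum_add_distrib, sum_sub_distrib, ← mul_sum, hcross, sum_const,
    card_univ, nsmul_eq_mul]
  nlinarith [sq_nonneg ‖m‖, (Nat.cast_nonneg (Fintype.card ι) : (0 : ℝ) ≤ _)]

theorem norm_sq_le_of_norm_sub_le_s7 {E : Type*} [SeminormedAddCommGroup E] {u v : E} {c : ℝ}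
    (h : ‖u - v‖ ≤ c) : ‖u‖ ^ 2 ≤ 2 * c ^ 2 + 2 * ‖v‖ ^ 2 :=
  calc ‖u‖ ^ 2 ≤ (‖u - v‖ + ‖v‖) ^ 2 := by gcongr; exact norm_le_norm_sub_add u v
    _ ≤ (c + ‖v‖) ^ 2 := by gcongr
    _ ≤ 2 * c ^ 2 + 2 * ‖v‖ ^ 2 := by linarith [add_sq_le (a := c) (b := ‖v‖)]

theorem sample_average_deviation_bound_general {E : Type*} [NormedAddCommGroup E] [InnerProductSpace ℝ E]
    (n : ℕ) (hn : 2 ≤ n) (F : Fin n → E → E) (L : Fin n → ℝ)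
    (hLip : ∀ i, ∀ z₁ z₂, ‖F i z₁ - F i z₂‖ ≤ L i * ‖z₁ - z₂‖)
    (Favg : E → E) (hF : ∀ z, Favg z = (n : ℝ)⁻¹ • ∑ i, F i z)
    (zstar : E)
    (d' : ℕ) (hd'n : d' ≤ n) (z : E) :
    (d' : ℝ) ^ 2 *
        ((Fintype.card (Equiv.Perm (Fin n)) : ℝ)⁻¹ *
          ∑ π : Equiv.Perm (Fin n),
            ‖(d' : ℝ)⁻¹ • (∑ j : Fin d', F (π (Fin.castLE hd'n j)) z) - Favg z‖ ^ 2) ≤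
      ((d' : ℝ) * ((n : ℝ) - d') / ((n : ℝ) - 1)) *
        (((2 / (n : ℝ)) * ∑ i, L i ^ 2) * ‖z - zstar‖ ^ 2 +
          2 * ((n : ℝ)⁻¹ * ∑ i, ‖F i zstar‖ ^ 2)) := by
  have hn1 : (1 : ℝ) < n := by exact_mod_cast hn
  have hdn : (d' : ℝ) ≤ n := by exact_mod_cast hd'n
  have hsumF : ∑ i, F i z = (Fintype.card (Fin n) : ℝ) • Favg z := by
    rw [hF z, Fintype.card_fin, smul_inv_smul₀ (by positivity)]
  have hsample := Equiv.Perm.card_sq_mul_average_norm_sample_mean_sub_sq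
    (by rwa [Fintype.card_fin]) hsumF (Fin.castLEEmb hd'n)
  simp only [Fintype.card_fin, Fin.castLEEmb_apply] at hsample
  have hvar : ∑ i, ‖F i z - Favg z‖ ^ 2 ≤
      ∑ i, (2 * (L i * ‖z - zstar‖) ^ 2 + 2 * ‖F i zstar‖ ^ 2) :=
    (sum_norm_sub_sq_le_sum_norm_sq hsumF).trans
      (sum_le_sum fun i _ => norm_sq_le_of_norm_sub_le_s7 (hLip i z zstar))
  have hcoef : 0 ≤ (d' : ℝ) * (n - d') / (n * (n - 1)) := by
    apply div_nonneg <;> nlinarith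
  calc _ = (d' : ℝ) * (n - d') / (n * (n - 1)) * ∑ i, ‖F i z - Favg z‖ ^ 2 := hsample
    _ ≤ (d' : ℝ) * (n - d') / (n * (n - 1)) *
          ∑ i, (2 * (L i * ‖z - zstar‖) ^ 2 + 2 * ‖F i zstar‖ ^ 2) :=
        mul_le_mul_of_nonneg_left hvar hcoef
    _ = _ := by
        simp only [sum_add_distrib, ← sum_mul, ← mul_sum, mul_pow]
        field_simp

theorem sample_average_deviation_bound {E : Type*} [NormedAddCommGroup E] [InnerProductSpace ℝ E]
    (n : ℕ) (hn : 2 ≤ n) (F : Fin n → E → E) (L : Fin n → ℝ)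
    (hLip : ∀ i, ∀ z₁ z₂, ‖F i z₁ - F i z₂‖ ≤ L i * ‖z₁ - z₂‖)
    (Favg : E → E) (hF : ∀ z, Favg z = (n : ℝ)⁻¹ • ∑ i, F i z)
    (zstar : E) (hz : Favg zstar = 0)
    (d' : ℕ) (hd'1 : 1 ≤ d') (hd'n : d' ≤ n) (z : E) :
    (d' : ℝ) ^ 2 *
        ((Fintype.card (Equiv.Perm (Fin n)) : ℝ)⁻¹ *
          ∑ π : Equiv.Perm (Fin n),
            ‖(d' : ℝ)⁻¹ • (∑ j : Fin d', F (π (Fin.castLE hd'n j)) z) - Favg z‖ ^ 2) ≤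
      ((d' : ℝ) * ((n : ℝ) - d') / ((n : ℝ) - 1)) *
        (((2 / (n : ℝ)) * ∑ i, L i ^ 2) * ‖z - zstar‖ ^ 2 +
          2 * ((n : ℝ)⁻¹ * ∑ i, ‖F i zstar‖ ^ 2)) :=
  sample_average_deviation_bound_general n hn F L hLip Favg hF zstar d' hd'n z
end

section
/- Let F : R^d → R^d be monotone and L-Lipschitz with F(z_*) = 0. Fix step sizes γ₁ > 0 and 0 < γ₂ ≤ 1/L, an integer n ≥ 1, a point z₀ ∈ R^d, and set ẑ₀ = z₀ - γ₂F(z₀). Then ‖z₀ - z_* - γ₁ n F(ẑ₀)‖² ≤ (1 + 4γ₁²n²L²)‖z₀ - z_*‖² - γ₁γ₂n(1 - γ₂²L²)‖F(z₀)‖². -/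
/-!
Put `w = z₀ - γ₂ F(z₀)`, `a = z₀ - z_*` and expand `‖a - γ₁ n F(w)‖²`. Lipschitz continuity
bounds the quadratic term: `‖F(w)‖ ≤ L ‖w - z_*‖ ≤ L (1 + γ₂ L) ‖a‖ ≤ 2 L ‖a‖`. For the cross term,
split `a = (w - z_*) + γ₂ F(z₀)`: monotonicity makes `⟪F(w), w - z_*⟫ ≥ 0`, and since `F(w)` is
within `γ₂ L ‖F(z₀)‖` of `F(z₀)`, `⟪F(w), F(z₀)⟫ ≥ (1 - γ₂ L) ‖F(z₀)‖²`. Finally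
`2 (1 - γ₂ L) ≥ (1 - γ₂ L)(1 + γ₂ L) = 1 - γ₂² L²`.
-/

open RealInnerProductSpace

section ExtrapolationStep

variable {E : Type*} [NormedAddCommGroup E] [InnerProductSpace ℝ E] {F : E → E} {L γ : ℝ}

lemma norm_apply_sub_smul_apply_le (hLip : ∀ z₁ z₂ : E, ‖F z₁ - F z₂‖ ≤ L * ‖z₁ - z₂‖)
    {zstar : E} (hz : F zstar = 0) (hL : 0 ≤ L) (hγ : 0 ≤ γ) (z : E) :
    ‖F (z - γ • F z)‖ ≤ L * (1 + γ * L) * ‖z - zstar‖ := by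
  have hFz : ‖F z‖ ≤ L * ‖z - zstar‖ := by simpa [hz] using hLip z zstar
  have hdist : ‖z - γ • F z - zstar‖ ≤ ‖z - zstar‖ + γ * ‖F z‖ := by
    rw [sub_right_comm, ← norm_smul_of_nonneg hγ]
    exact norm_sub_le _ _
  calc ‖F (z - γ • F z)‖ ≤ L * ‖z - γ • F z - zstar‖ := by simpa [hz] using hLip _ zstar
    _ ≤ L * (‖z - zstar‖ + γ * ‖F z‖) := by gcongr
    _ ≤ L * (‖z - zstar‖ + γ * (L * ‖z - zstar‖)) := by gcongr
    _ = L * (1 + γ * L) * ‖z - zstar‖ := by ring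

lemma inner_apply_sub_smul_apply_ge (hLip : ∀ z₁ z₂ : E, ‖F z₁ - F z₂‖ ≤ L * ‖z₁ - z₂‖)
    (hγ : 0 ≤ γ) (z : E) :
    (1 - γ * L) * ‖F z‖ ^ 2 ≤ ⟪F (z - γ • F z), F z⟫ := by
  have hclose : ‖F z - F (z - γ • F z)‖ ≤ L * (γ * ‖F z‖) := by
    simpa only [sub_sub_cancel, norm_smul, Real.norm_of_nonneg hγ] using hLip z (z - γ • F z)
  have hinner : ⟪F z - F (z - γ • F z), F z⟫ ≤ ‖F z - F (z - γ • F z)‖ * ‖F z‖ :=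
    real_inner_le_norm _ _
  have hsplit : ⟪F (z - γ • F z), F z⟫ = ‖F z‖ ^ 2 - ⟪F z - F (z - γ • F z), F z⟫ := by
    rw [inner_sub_left, real_inner_self_eq_norm_sq]
    ring
  nlinarith [norm_nonneg (F z)]

lemma inner_apply_sub_smul_apply_sub_ge (hmono : ∀ z₁ z₂ : E, 0 ≤ ⟪F z₁ - F z₂, z₁ - z₂⟫)
    (hLip : ∀ z₁ z₂ : E, ‖F z₁ - F z₂‖ ≤ L * ‖z₁ - z₂‖) {zstar : E} (hz : F zstar = 0)
    (hγ : 0 ≤ γ) (z : E) :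
    γ * (1 - γ * L) * ‖F z‖ ^ 2 ≤ ⟪F (z - γ • F z), z - zstar⟫ := by
  have hsplit : z - zstar = (z - γ • F z - zstar) + γ • F z := by abel
  have hmono_w : 0 ≤ ⟪F (z - γ • F z), z - γ • F z - zstar⟫ := by
    simpa [hz] using hmono (z - γ • F z) zstar
  rw [hsplit, inner_add_right, inner_smul_right]
  nlinarith [inner_apply_sub_smul_apply_ge hLip hγ z]

end ExtrapolationStep

theorem monotone_extra_step_bound_general {E : Type*} [NormedAddCommGroup E] [InnerProductSpace ℝ E]
    (F : E → E) (L γ₁ γ₂ : ℝ) (n : ℕ)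
    (hL : 0 < L) (hγ₁ : 0 < γ₁) (hγ₂ : 0 < γ₂) (hγ₂' : γ₂ ≤ 1 / L)
    (hmono : ∀ z₁ z₂ : E, 0 ≤ (inner ℝ (F z₁ - F z₂) (z₁ - z₂) : ℝ))
    (hLip : ∀ z₁ z₂ : E, ‖F z₁ - F z₂‖ ≤ L * ‖z₁ - z₂‖)
    (zstar z₀ : E) (hz : F zstar = 0) :
    ‖z₀ - zstar - (γ₁ * n) • F (z₀ - γ₂ • F z₀)‖ ^ 2 ≤
      (1 + 4 * γ₁ ^ 2 * (n : ℝ) ^ 2 * L ^ 2) * ‖z₀ - zstar‖ ^ 2 -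
        γ₁ * γ₂ * n * (1 - γ₂ ^ 2 * L ^ 2) * ‖F z₀‖ ^ 2 := by
  have hγL : γ₂ * L ≤ 1 := by rwa [le_div_iff₀ hL] at hγ₂'
  have hs : 0 ≤ γ₁ * n := by positivity
  have hquad : ‖F (z₀ - γ₂ • F z₀)‖ ≤ 2 * L * ‖z₀ - zstar‖ := by
    refine (norm_apply_sub_smul_apply_le hLip hz hL.le hγ₂.le z₀).trans ?_
    rw [mul_comm 2 L]
    gcongr
    linarith
  have hcross := inner_apply_sub_smul_apply_sub_ge hmono hLip hz hγ₂.le z₀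
  rw [norm_sub_sq_real, inner_smul_right, real_inner_comm, norm_smul, Real.norm_of_nonneg hs]
  have hquad_sq := pow_le_pow_left₀ (norm_nonneg _) hquad 2
  have hFz₀ : 0 ≤ γ₁ * γ₂ * n * ‖F z₀‖ ^ 2 := by positivity
  nlinarith [mul_le_mul_of_nonneg_left hquad_sq (sq_nonneg (γ₁ * n)),
    mul_le_mul_of_nonneg_left hcross hs, mul_nonneg hFz₀ (sq_nonneg (1 - γ₂ * L))]

theorem monotone_extra_step_bound {E : Type*} [NormedAddCommGroup E] [InnerProductSpace ℝ E]
    (F : E → E) (L γ₁ γ₂ : ℝ) (n : ℕ) (hn : 1 ≤ n)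
    (hL : 0 < L) (hγ₁ : 0 < γ₁) (hγ₂ : 0 < γ₂) (hγ₂' : γ₂ ≤ 1 / L)
    (hmono : ∀ z₁ z₂ : E, 0 ≤ (inner ℝ (F z₁ - F z₂) (z₁ - z₂) : ℝ))
    (hLip : ∀ z₁ z₂ : E, ‖F z₁ - F z₂‖ ≤ L * ‖z₁ - z₂‖)
    (zstar z₀ : E) (hz : F zstar = 0) :
    ‖z₀ - zstar - (γ₁ * n) • F (z₀ - γ₂ • F z₀)‖ ^ 2 ≤
      (1 + 4 * γ₁ ^ 2 * (n : ℝ) ^ 2 * L ^ 2) * ‖z₀ - zstar‖ ^ 2 -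
        γ₁ * γ₂ * n * (1 - γ₂ ^ 2 * L ^ 2) * ‖F z₀‖ ^ 2 :=
  monotone_extra_step_bound_general F L γ₁ γ₂ n hL hγ₁ hγ₂ hγ₂' hmono hLip zstar z₀ hz
end

section
/- Let F₁, ..., F_n : R^d → R^d each be L_max-Lipschitz, F = (1/n)Σ F_i, and fix γ₂ with 0 < γ₂ ≤ 1/L_max. For points z₀, z_0', ..., z_{n-1}' ∈ R^d define z̄_i = z_i' - γ₂F_{σ(i)}(z_i') and ẑ₀ = z₀ - γ₂F(z₀) for any function σ : {0,...,n-1} → {1,...,n}. Then Σ_{i=0}^{n-1} ‖F_{σ(i)}(z̄_i) - F_{σ(i)}(ẑ₀)‖² ≤ 6L_max² Σ_{i=0}^{n-1} ‖z_i' - z₀‖² + 3L_max²γ₂² Σ_{i=0}^{n-1} ‖F_{σ(i)}(z₀) - F(z₀)‖². -/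
/-!
The bound holds summand by summand. With `G = F_{σ i}`, Lipschitz continuity bounds the `i`-th
summand by `L² ‖z̄ᵢ - ẑ₀‖²`, and
`z̄ᵢ - ẑ₀ = (zᵢ' - z₀) - γ (G zᵢ' - G z₀) - γ (G z₀ - F z₀)`.
Since `‖a - b - c‖² ≤ 3 (‖a‖² + ‖b‖² + ‖c‖²)` and `γ L ≤ 1` makes the middle term at most
`‖zᵢ' - z₀‖`, this gives `‖z̄ᵢ - ẑ₀‖² ≤ 6 ‖zᵢ' - z₀‖² + 3 γ² ‖G z₀ - F z₀‖²`.
-/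

theorem norm_sub_sub_sq_le_three_mul {E : Type*} [SeminormedAddCommGroup E] (a b c : E) :
    ‖a - b - c‖ ^ 2 ≤ 3 * (‖a‖ ^ 2 + ‖b‖ ^ 2 + ‖c‖ ^ 2) := by
  have h : ‖a - b - c‖ ≤ ‖a‖ + ‖b‖ + ‖c‖ :=
    (norm_sub_le _ _).trans (by gcongr; exact norm_sub_le _ _)
  nlinarith [norm_nonneg (a - b - c), sq_nonneg (‖a‖ - ‖b‖), sq_nonneg (‖b‖ - ‖c‖),
    sq_nonneg (‖a‖ - ‖c‖)]

section ExtragradientStep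

variable {E : Type*} [SeminormedAddCommGroup E] [NormedSpace ℝ E] {G : E → E} {L γ : ℝ}

theorem norm_extragradient_step_sub_sq_le (hG : ∀ x y, ‖G x - G y‖ ≤ L * ‖x - y‖)
    (hγ : 0 ≤ γ) (hγL : γ * L ≤ 1) (z w v : E) :
    ‖(z - γ • G z) - (w - γ • v)‖ ^ 2 ≤ 6 * ‖z - w‖ ^ 2 + 3 * γ ^ 2 * ‖G w - v‖ ^ 2 := by
  have hsplit : (z - γ • G z) - (w - γ • v) = (z - w) - γ • (G z - G w) - γ • (G w - v) := by
    simp only [smul_sub]; abel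
  have hmiddle : ‖γ • (G z - G w)‖ ≤ ‖z - w‖ :=
    calc ‖γ • (G z - G w)‖ = γ * ‖G z - G w‖ := by rw [norm_smul, Real.norm_of_nonneg hγ]
      _ ≤ γ * (L * ‖z - w‖) := by gcongr; exact hG z w
      _ = (γ * L) * ‖z - w‖ := by ring
      _ ≤ ‖z - w‖ := mul_le_of_le_one_left (norm_nonneg _) hγL
  calc ‖(z - γ • G z) - (w - γ • v)‖ ^ 2
      ≤ 3 * (‖z - w‖ ^ 2 + ‖γ • (G z - G w)‖ ^ 2 + ‖γ • (G w - v)‖ ^ 2) := by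
        rw [hsplit]; exact norm_sub_sub_sq_le_three_mul _ _ _
    _ ≤ 3 * (‖z - w‖ ^ 2 + ‖z - w‖ ^ 2 + γ ^ 2 * ‖G w - v‖ ^ 2) := by
        rw [norm_smul γ (G w - v), mul_pow, Real.norm_eq_abs, sq_abs]; gcongr
    _ = 6 * ‖z - w‖ ^ 2 + 3 * γ ^ 2 * ‖G w - v‖ ^ 2 := by ring

theorem norm_apply_extragradient_step_sub_sq_le (hG : ∀ x y, ‖G x - G y‖ ≤ L * ‖x - y‖)
    (hγ : 0 ≤ γ) (hγL : γ * L ≤ 1) (z w v : E) :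
    ‖G (z - γ • G z) - G (w - γ • v)‖ ^ 2 ≤
      6 * L ^ 2 * ‖z - w‖ ^ 2 + 3 * L ^ 2 * γ ^ 2 * ‖G w - v‖ ^ 2 :=
  calc ‖G (z - γ • G z) - G (w - γ • v)‖ ^ 2
      ≤ L ^ 2 * ‖(z - γ • G z) - (w - γ • v)‖ ^ 2 := by
        rw [← mul_pow]; exact pow_le_pow_left₀ (norm_nonneg _) (hG _ _) 2
    _ ≤ L ^ 2 * (6 * ‖z - w‖ ^ 2 + 3 * γ ^ 2 * ‖G w - v‖ ^ 2) := by
        gcongr; exact norm_extragradient_step_sub_sq_le hG hγ hγL z w v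
    _ = 6 * L ^ 2 * ‖z - w‖ ^ 2 + 3 * L ^ 2 * γ ^ 2 * ‖G w - v‖ ^ 2 := by ring

end ExtragradientStep

theorem extrapolation_deviation_bound_general {E : Type*} [NormedAddCommGroup E]
    [InnerProductSpace ℝ E]
    (n : ℕ) (Lmax γ₂ : ℝ) (hL : 0 < Lmax) (hγ : 0 < γ₂) (hγ' : γ₂ ≤ 1 / Lmax)
    (F : Fin n → E → E)
    (hLip : ∀ i, ∀ z₁ z₂, ‖F i z₁ - F i z₂‖ ≤ Lmax * ‖z₁ - z₂‖)
    (Favg : E → E)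
    (σ : Fin n → Fin n) (z₀ : E) (z' : Fin n → E) :
    ∑ i, ‖F (σ i) (z' i - γ₂ • F (σ i) (z' i)) - F (σ i) (z₀ - γ₂ • Favg z₀)‖ ^ 2 ≤
      6 * Lmax ^ 2 * ∑ i, ‖z' i - z₀‖ ^ 2 +
        3 * Lmax ^ 2 * γ₂ ^ 2 * ∑ i, ‖F (σ i) z₀ - Favg z₀‖ ^ 2 := by
  have hγL : γ₂ * Lmax ≤ 1 := (le_div_iff₀ hL).mp hγ'
  calc ∑ i, ‖F (σ i) (z' i - γ₂ • F (σ i) (z' i)) - F (σ i) (z₀ - γ₂ • Favg z₀)‖ ^ 2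
      ≤ ∑ i, (6 * Lmax ^ 2 * ‖z' i - z₀‖ ^ 2 +
          3 * Lmax ^ 2 * γ₂ ^ 2 * ‖F (σ i) z₀ - Favg z₀‖ ^ 2) :=
        Finset.sum_le_sum fun i _ =>
          norm_apply_extragradient_step_sub_sq_le (hLip (σ i)) hγ.le hγL _ _ _
    _ = 6 * Lmax ^ 2 * ∑ i, ‖z' i - z₀‖ ^ 2 +
        3 * Lmax ^ 2 * γ₂ ^ 2 * ∑ i, ‖F (σ i) z₀ - Favg z₀‖ ^ 2 := by
        rw [Finset.sum_add_distrib, Finset.mul_sum, Finset.mul_sum]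

theorem extrapolation_deviation_bound {E : Type*} [NormedAddCommGroup E]
    [InnerProductSpace ℝ E]
    (n : ℕ) (Lmax γ₂ : ℝ) (hL : 0 < Lmax) (hγ : 0 < γ₂) (hγ' : γ₂ ≤ 1 / Lmax)
    (F : Fin n → E → E)
    (hLip : ∀ i, ∀ z₁ z₂, ‖F i z₁ - F i z₂‖ ≤ Lmax * ‖z₁ - z₂‖)
    (Favg : E → E) (hF : ∀ z, Favg z = (n : ℝ)⁻¹ • ∑ i, F i z)
    (σ : Fin n → Fin n) (z₀ : E) (z' : Fin n → E) :
    ∑ i, ‖F (σ i) (z' i - γ₂ • F (σ i) (z' i)) - F (σ i) (z₀ - γ₂ • Favg z₀)‖ ^ 2 ≤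
      6 * Lmax ^ 2 * ∑ i, ‖z' i - z₀‖ ^ 2 +
        3 * Lmax ^ 2 * γ₂ ^ 2 * ∑ i, ‖F (σ i) z₀ - Favg z₀‖ ^ 2 :=
  extrapolation_deviation_bound_general n Lmax γ₂ hL hγ hγ' F hLip Favg σ z₀ z'
end
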